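/- Let n ≥ 1, k ≥ 0, and let (ε, σ) ∈ B n. Then the number of points x : Fin n → ZMod (2k+1) fixed by the action of (ε, σ) equals (2k+1)^(e(ε,σ)), where e(ε,σ) is the number of even orbits of σ on Fin n. (Equivalently, the character of the permutation representation ℂ[(ℤ/(2k+1)ℤ)^n] of B n at (ε, σ) equals (2k+1)^(e(ε,σ)).) -/

import Mathlib

/-! Common setup: the signed symmetric group `B n` as a semidirect product,
its action on `Fin n → ZMod m`, and the inclusion `B n →* B (n+1)`. -/

/-- The additive automorphism of sign vectors induced by a permutation:
`ε ↦ ε ∘ σ⁻¹`. -/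
def signAddAut (n : ℕ) (σ : Equiv.Perm (Fin n)) :
    (Fin n → ZMod 2) ≃+ (Fin n → ZMod 2) :=
  { Equiv.arrowCongr σ (Equiv.refl (ZMod 2)) with
    map_add' := fun _ _ => rfl }

/-- The action of permutations on sign vectors, as a homomorphism to the
automorphism group of `Multiplicative (Fin n → ZMod 2)`. -/
def bSignHom (n : ℕ) :
    Equiv.Perm (Fin n) →* MulAut (Multiplicative (Fin n → ZMod 2)) where
  toFun σ := AddEquiv.toMultiplicative (signAddAut n σ)
  map_one' := by ext ε; rfl
  map_mul' σ τ := by ext ε; rfl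

/-- The signed symmetric group on `n` letters, modelled as the semidirect
product `(Fin n → ZMod 2) ⋊ Equiv.Perm (Fin n)`, where a permutation acts
on sign vectors by `σ • ε = ε ∘ σ⁻¹`. -/
abbrev B (n : ℕ) :=
  Multiplicative (Fin n → ZMod 2) ⋊[bSignHom n] Equiv.Perm (Fin n)

lemma neg_one_pow_val_add {M : Type*} [Monoid M] [HasDistribNeg M] (a b : ZMod 2) :
    (-1 : M) ^ (a + b).val = (-1 : M) ^ a.val * (-1 : M) ^ b.val := by
  rw [← pow_add]
  fin_cases a <;> fin_cases b
  · rfl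
  · rfl
  · rfl
  · show (-1 : M) ^ 0 = (-1 : M) ^ 2
    rw [pow_zero, neg_one_sq]

/-- The action of `B n` on `Fin n → ZMod m`: permute coordinates and negate
the coordinates with sign `1`, i.e. `((ε,σ) • x) i = (-1)^(ε i).val * x (σ⁻¹ i)`. -/
instance BAct (n m : ℕ) : MulAction (B n) (Fin n → ZMod m) where
  smul g x := fun i =>
    (-1 : ZMod m) ^ (Multiplicative.toAdd g.left i).val * x (g.right⁻¹ i)
  one_smul x := by
    funext i
    show (-1 : ZMod m) ^ ((0 : ZMod 2)).val * x i = x i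
    simp
  mul_smul g h x := by
    funext i
    show (-1 : ZMod m) ^ ((Multiplicative.toAdd g.left i)
        + (Multiplicative.toAdd h.left (g.right⁻¹ i))).val
        * x (h.right⁻¹ (g.right⁻¹ i))
      = (-1 : ZMod m) ^ (Multiplicative.toAdd g.left i).val
        * ((-1 : ZMod m) ^ (Multiplicative.toAdd h.left (g.right⁻¹ i)).val
          * x (h.right⁻¹ (g.right⁻¹ i)))
    rw [neg_one_pow_val_add, mul_assoc]

lemma bact_smul_def {n m : ℕ} (g : B n) (x : Fin n → ZMod m) (i : Fin n) :
    (g • x) i = (-1 : ZMod m) ^ (Multiplicative.toAdd g.left i).val * x (g.right⁻¹ i) :=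
  rfl

/-- Extension of a permutation of `Fin n` to `Fin (n+1)`, fixing the last letter. -/
def extendPermEquiv {n : ℕ} (σ : Equiv.Perm (Fin n)) : Equiv.Perm (Fin (n + 1)) where
  toFun := Fin.snoc (fun i => Fin.castSucc (σ i)) (Fin.last n)
  invFun := Fin.snoc (fun i => Fin.castSucc (σ⁻¹ i)) (Fin.last n)
  left_inv j := by
    induction j using Fin.lastCases with
    | last => simp
    | cast i => simp
  right_inv j := by
    induction j using Fin.lastCases with
    | last => simp
    | cast i => simp

@[simp] lemma extendPermEquiv_castSucc {n : ℕ} (σ : Equiv.Perm (Fin n)) (i : Fin n) :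
    extendPermEquiv σ (Fin.castSucc i) = Fin.castSucc (σ i) := by
  simp [extendPermEquiv]

@[simp] lemma extendPermEquiv_last {n : ℕ} (σ : Equiv.Perm (Fin n)) :
    extendPermEquiv σ (Fin.last n) = Fin.last n := by
  simp [extendPermEquiv]

@[simp] lemma extendPermEquiv_inv {n : ℕ} (σ : Equiv.Perm (Fin n)) :
    (extendPermEquiv σ)⁻¹ = extendPermEquiv σ⁻¹ := by
  refine Equiv.ext fun j => ?_
  rw [Equiv.Perm.inv_def, Equiv.symm_apply_eq]
  induction j using Fin.lastCases with
  | last => simp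
  | cast i => simp

@[simp] lemma extendPermEquiv_symm_castSucc {n : ℕ} (σ : Equiv.Perm (Fin n)) (i : Fin n) :
    (extendPermEquiv σ).symm (Fin.castSucc i) = Fin.castSucc (σ.symm i) := by
  rw [Equiv.symm_apply_eq]
  simp [Equiv.Perm.inv_def]

@[simp] lemma extendPermEquiv_symm_last {n : ℕ} (σ : Equiv.Perm (Fin n)) :
    (extendPermEquiv σ).symm (Fin.last n) = Fin.last n := by
  rw [Equiv.symm_apply_eq]
  simp

/-- The embedding `Equiv.Perm (Fin n) →* Equiv.Perm (Fin (n+1))` extending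
a permutation by the identity on the last letter. -/
def extendPerm (n : ℕ) : Equiv.Perm (Fin n) →* Equiv.Perm (Fin (n + 1)) where
  toFun := extendPermEquiv
  map_one' := by
    ext j
    induction j using Fin.lastCases with
    | last => simp
    | cast i => simp
  map_mul' σ τ := by
    ext j
    induction j using Fin.lastCases with
    | last => simp
    | cast i => simp

/-- The inclusion `B n →* B (n+1)`: extend the sign vector by `0` in the last
coordinate and the permutation by the identity on the last letter. -/
def ιB (n : ℕ) : B n →* B (n + 1) where
  toFun g :=
    ⟨Multiplicative.ofAdd
      (Fin.snoc (Multiplicative.toAdd g.left) 0 : Fin (n + 1) → ZMod 2), extendPerm n g.right⟩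
  map_one' := by
    refine SemidirectProduct.ext ?_ ?_
    · show Multiplicative.ofAdd
          (Fin.snoc (0 : Fin n → ZMod 2) (0 : ZMod 2) : Fin (n + 1) → ZMod 2) = 1
      have h : (Fin.snoc (0 : Fin n → ZMod 2) (0 : ZMod 2) : Fin (n + 1) → ZMod 2) = 0 := by
        funext j
        induction j using Fin.lastCases with
        | last => simp
        | cast i => simp
      rw [h]; rfl
    · show extendPerm n 1 = 1
      exact map_one _
  map_mul' g h := by
    refine SemidirectProduct.ext ?_ ?_
    · show Multiplicative.ofAdd
          (Fin.snoc (Multiplicative.toAdd ((g * h).left)) 0 : Fin (n + 1) → ZMod 2) = _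
      have key : (Fin.snoc (Multiplicative.toAdd ((g * h).left)) 0 : Fin (n + 1) → ZMod 2)
          = (Fin.snoc (Multiplicative.toAdd g.left) 0 : Fin (n + 1) → ZMod 2)
            + (Fin.snoc (Multiplicative.toAdd h.left) 0 : Fin (n + 1) → ZMod 2)
              ∘ ⇑((extendPermEquiv g.right)⁻¹) := by
        funext j
        induction j using Fin.lastCases with
        | last => simp
        | cast i =>
          show (Fin.snoc (Multiplicative.toAdd g.left
              + (Multiplicative.toAdd h.left) ∘ ⇑(g.right⁻¹)) 0
              : Fin (n + 1) → ZMod 2) i.castSucc = _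
          simp [Equiv.Perm.inv_def]
      rw [key]; rfl
    · show extendPerm n (g * h).right = _
      exact map_mul (extendPerm n) g.right h.right

/-- The orbits of (the cyclic subgroup generated by) a permutation `σ` of
`Fin n`, as finsets; `j` lies in the orbit of `i` iff `σ.SameCycle i j`, i.e.
iff `(σ ^ z) i = j` for some integer `z`.  Singleton orbits (fixed points of
`σ`) are included. -/
def orbitsOf {n : ℕ} (σ : Equiv.Perm (Fin n)) : Finset (Finset (Fin n)) :=
  Finset.univ.image fun i => Finset.univ.filter fun j => σ.SameCycle i j

/-- The number of orbits `O` of `σ` on `Fin n` that are even, i.e. with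
`∑ j ∈ O, ε j = 0` in `ZMod 2`. -/
def evenOrbitCount {n : ℕ} (ε : Fin n → ZMod 2) (σ : Equiv.Perm (Fin n)) : ℕ :=
  ((orbitsOf σ).filter fun O => (∑ j ∈ O, ε j) = 0).card

/-- The number of orbits `O` of `σ` on `Fin n` that are odd, i.e. with
`∑ j ∈ O, ε j ≠ 0` in `ZMod 2`. -/
def oddOrbitCount {n : ℕ} (ε : Fin n → ZMod 2) (σ : Equiv.Perm (Fin n)) : ℕ :=
  ((orbitsOf σ).filter fun O => (∑ j ∈ O, ε j) ≠ 0).card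

/-! A point `x` is fixed by `(ε, σ)` iff `x (σ j) = (-1) ^ ε (σ j) * x j` for all `j`, so walking
once around an orbit `O` from `i` back to `i` gives `x i = (-1) ^ (∑ j ∈ O, ε j) * x i`. On an odd
orbit this says `x i = -x i`, hence `x = 0` there because `2` is a unit modulo `2k+1`. On an even
orbit the sign accumulated along a walk from a base point `r` to `i` does not depend on the walk,
so `x` is determined on the orbit by the arbitrary value `x r`. Fixed points therefore correspond
to functions from the set of even orbits to `ZMod (2k+1)`. -/

open Equiv Finset Function

section Walk

variable {α G : Type*} [AddCommMonoid G] {σ : Perm α} {ε : α → G}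

variable (σ ε) in
def walkSum (i : α) (t : ℕ) : G := ∑ s ∈ range t, ε ((σ ^ (s + 1)) i)

lemma walkSum_zero (i : α) : walkSum σ ε i 0 = 0 := sum_range_zero _

lemma walkSum_succ (i : α) (t : ℕ) :
    walkSum σ ε i (t + 1) = walkSum σ ε i t + ε ((σ ^ (t + 1)) i) :=
  sum_range_succ _ _

lemma walkSum_add (i : α) (a b : ℕ) :
    walkSum σ ε i (a + b) = walkSum σ ε i a + walkSum σ ε ((σ ^ a) i) b := by
  simp only [walkSum, sum_range_add, ← Perm.mul_apply, ← pow_add]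
  congr 1
  exact sum_congr rfl fun s _ => by rw [show a + s + 1 = s + 1 + a by omega]

lemma Equiv.Perm.pow_apply_eq_self_iff_isPeriodicPt {n : ℕ} {i : α} :
    (σ ^ n) i = i ↔ IsPeriodicPt σ n i := by
  rw [IsPeriodicPt, IsFixedPt, Perm.iterate_eq_pow]

lemma walkSum_eq_zero_of_pow_apply_eq_self {i : α} {d : ℕ}
    (hi : walkSum σ ε i (minimalPeriod σ i) = 0) (hd : (σ ^ d) i = i) :
    walkSum σ ε i d = 0 := by
  obtain ⟨q, rfl⟩ := (Perm.pow_apply_eq_self_iff_isPeriodicPt.1 hd).minimalPeriod_dvd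
  induction q with
  | zero => exact walkSum_zero i
  | succ q ih =>
    have hq : (σ ^ (minimalPeriod σ i * q)) i = i :=
      Perm.pow_apply_eq_self_iff_isPeriodicPt.2 ((isPeriodicPt_minimalPeriod σ i).mul_const q)
    rw [Nat.mul_succ, walkSum_add, hq, hi, ih hq, add_zero]

lemma walkSum_congr {i : α} {a b : ℕ} (hi : walkSum σ ε i (minimalPeriod σ i) = 0)
    (hab : (σ ^ a) i = (σ ^ b) i) : walkSum σ ε i a = walkSum σ ε i b := by
  wlog hle : a ≤ b generalizing a b
  · exact (this hab.symm (not_le.1 hle).le).symm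
  obtain ⟨d, rfl⟩ := Nat.exists_eq_add_of_le hle
  have hd : (σ ^ d) i = i := by
    rwa [pow_add, Perm.mul_apply, (σ ^ a).injective.eq_iff, eq_comm] at hab
  rw [add_comm, walkSum_add, hd, walkSum_eq_zero_of_pow_apply_eq_self hi hd, zero_add]

open Classical in
variable (σ ε) in
noncomputable def phase (r i : α) : G :=
  if h : ∃ t : ℕ, (σ ^ t) r = i then walkSum σ ε r h.choose else 0

lemma phase_eq_walkSum {r i : α} {t : ℕ} (hr : walkSum σ ε r (minimalPeriod σ r) = 0)
    (ht : (σ ^ t) r = i) : phase σ ε r i = walkSum σ ε r t := by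
  have h : ∃ t : ℕ, (σ ^ t) r = i := ⟨t, ht⟩
  rw [phase, dif_pos h]
  exact walkSum_congr hr (h.choose_spec.trans ht.symm)

end Walk

section SignedFixed

variable {α R : Type*} [CommRing R] {σ : Perm α} {ε : α → ZMod 2} {x : α → R}

variable (σ ε) in
def IsSignedFixed (x : α → R) : Prop := ∀ j, x (σ j) = (-1) ^ (ε (σ j)).val * x j

lemma IsSignedFixed.apply_pow_apply (hx : IsSignedFixed σ ε x) (i : α) (t : ℕ) :
    x ((σ ^ t) i) = (-1) ^ (walkSum σ ε i t).val * x i := by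
  induction t with
  | zero => simp [walkSum_zero]
  | succ t ih =>
    rw [pow_succ', Perm.mul_apply, hx, ih, ← Perm.mul_apply, ← pow_succ', walkSum_succ,
      neg_one_pow_val_add]
    ring

lemma IsSignedFixed.eq_zero_of_walkSum_ne_zero (h2 : IsUnit (2 : R))
    (hx : IsSignedFixed σ ε x) {i : α} (hi : walkSum σ ε i (minimalPeriod σ i) ≠ 0) :
    x i = 0 := by
  have hval : (walkSum σ ε i (minimalPeriod σ i)).val = 1 := by
    have val_of_ne_zero : ∀ a : ZMod 2, a ≠ 0 → a.val = 1 := by decide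
    exact val_of_ne_zero _ hi
  have h := hx.apply_pow_apply i (minimalPeriod σ i)
  rw [Perm.pow_apply_eq_self_iff_isPeriodicPt.2 (isPeriodicPt_minimalPeriod σ i), hval, pow_one,
    neg_one_mul, eq_neg_iff_add_eq_zero, ← two_mul] at h
  exact h2.mul_right_eq_zero.1 h

end SignedFixed

section Orbit

variable {α : Type*} [Fintype α] [DecidableEq α] {σ : Perm α} {i j : α}

variable (σ) in
def orbitFinset (i : α) : Finset α := {j | σ.SameCycle i j}

lemma mem_orbitFinset : j ∈ orbitFinset σ i ↔ σ.SameCycle i j := by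
  simp [orbitFinset]

lemma self_mem_orbitFinset (i : α) : i ∈ orbitFinset σ i :=
  mem_orbitFinset.2 (Perm.SameCycle.refl σ i)

lemma orbitFinset_eq_of_sameCycle (h : σ.SameCycle i j) : orbitFinset σ i = orbitFinset σ j := by
  ext a
  simp only [mem_orbitFinset]
  exact ⟨h.symm.trans, h.trans⟩

lemma orbitFinset_eq_image_range (i : α) :
    orbitFinset σ i = (range (minimalPeriod σ i)).image fun t => (σ ^ t) i := by
  have hpos := minimalPeriod_pos_of_mem_periodicPts (σ.injective.mem_periodicPts i)
  ext j
  simp only [mem_orbitFinset, mem_image, mem_range]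
  constructor
  · intro h
    obtain ⟨t, rfl⟩ := h.exists_nat_pow_eq
    refine ⟨t % minimalPeriod σ i, Nat.mod_lt _ hpos, ?_⟩
    simpa only [Perm.iterate_eq_pow] using iterate_mod_minimalPeriod_eq (f := σ) (x := i) (n := t)
  · rintro ⟨t, -, rfl⟩
    exact Perm.sameCycle_pow_right.2 (Perm.SameCycle.refl σ i)

lemma sum_orbitFinset_eq_walkSum {G : Type*} [AddCancelCommMonoid G] (ε : α → G) (i : α) :
    ∑ j ∈ orbitFinset σ i, ε j = walkSum σ ε i (minimalPeriod σ i) := by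
  rw [orbitFinset_eq_image_range, sum_image]
  · have hper : (σ ^ minimalPeriod σ i) i = i :=
      Perm.pow_apply_eq_self_iff_isPeriodicPt.2 (isPeriodicPt_minimalPeriod σ i)
    have h := sum_range_succ' (fun s => ε ((σ ^ s) i)) (minimalPeriod σ i)
    rw [sum_range_succ, hper, pow_zero, Perm.one_apply] at h
    exact add_right_cancel h
  · intro a ha b hb hab
    refine iterate_injOn_Iio_minimalPeriod (f := σ) (mem_range.1 ha) (mem_range.1 hb) ?_
    simpa only [Perm.iterate_eq_pow] using hab

end Orbit

section Representative

variable {α : Type*} [Fintype α] [LinearOrder α] {σ : Perm α} {i j : α}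

variable (σ) in
def orbitRep (i : α) : α := (orbitFinset σ i).min' ⟨i, self_mem_orbitFinset i⟩

lemma sameCycle_orbitRep (i : α) : σ.SameCycle (orbitRep σ i) i :=
  (mem_orbitFinset.1 (min'_mem _ _)).symm

lemma orbitRep_eq_of_sameCycle (h : σ.SameCycle i j) : orbitRep σ i = orbitRep σ j := by
  simp only [orbitRep, orbitFinset_eq_of_sameCycle h]

lemma orbitRep_orbitRep (i : α) : orbitRep σ (orbitRep σ i) = orbitRep σ i :=
  orbitRep_eq_of_sameCycle (sameCycle_orbitRep i)

variable {G : Type*} [AddCancelCommMonoid G] {ε : α → G}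

variable (σ ε) in
noncomputable def orbitPhase (i : α) : G := phase σ ε (orbitRep σ i) i

lemma walkSum_orbitRep_eq_zero (h : ∑ j ∈ orbitFinset σ i, ε j = 0) :
    walkSum σ ε (orbitRep σ i) (minimalPeriod σ (orbitRep σ i)) = 0 := by
  rwa [← sum_orbitFinset_eq_walkSum, orbitFinset_eq_of_sameCycle (sameCycle_orbitRep i)]

lemma orbitPhase_eq_walkSum (h : ∑ j ∈ orbitFinset σ i, ε j = 0) {t : ℕ}
    (ht : (σ ^ t) (orbitRep σ i) = i) : orbitPhase σ ε i = walkSum σ ε (orbitRep σ i) t :=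
  phase_eq_walkSum (walkSum_orbitRep_eq_zero h) ht

lemma orbitPhase_apply (h : ∑ j ∈ orbitFinset σ i, ε j = 0) :
    orbitPhase σ ε (σ i) = orbitPhase σ ε i + ε (σ i) := by
  have hrep : orbitRep σ (σ i) = orbitRep σ i :=
    (orbitRep_eq_of_sameCycle (Perm.sameCycle_apply_right.2 (Perm.SameCycle.refl σ i))).symm
  obtain ⟨t, ht⟩ := (sameCycle_orbitRep (σ := σ) i).exists_nat_pow_eq
  have ht' : (σ ^ (t + 1)) (orbitRep σ i) = σ i := by rw [pow_succ', Perm.mul_apply, ht]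
  rw [orbitPhase_eq_walkSum h ht, orbitPhase, hrep,
    phase_eq_walkSum (walkSum_orbitRep_eq_zero h) ht', walkSum_succ, ht']

lemma orbitPhase_orbitRep (h : ∑ j ∈ orbitFinset σ i, ε j = 0) :
    orbitPhase σ ε (orbitRep σ i) = 0 := by
  have h0 : (σ ^ 0) (orbitRep σ i) = orbitRep σ i := by rw [pow_zero, Perm.one_apply]
  rw [orbitPhase, orbitRep_orbitRep, phase_eq_walkSum (walkSum_orbitRep_eq_zero h) h0,
    walkSum_zero]

end Representative

section Count

variable {α R : Type*} [Fintype α] [LinearOrder α] [CommRing R] {σ : Perm α} {ε : α → ZMod 2}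

variable (σ ε) in
def evenOrbits : Finset (Finset α) :=
  (univ.image (orbitFinset σ)).filter fun O => ∑ j ∈ O, ε j = 0

lemma orbitFinset_mem_evenOrbits_iff {i : α} :
    orbitFinset σ i ∈ evenOrbits σ ε ↔ ∑ j ∈ orbitFinset σ i, ε j = 0 := by
  simp [evenOrbits]

variable (σ ε) in
noncomputable def extendFromEvenOrbits (f : evenOrbits σ ε → R) (i : α) : R :=
  if h : orbitFinset σ i ∈ evenOrbits σ ε then (-1) ^ (orbitPhase σ ε i).val * f ⟨_, h⟩ else 0

lemma nonempty_of_mem_evenOrbits {O : Finset α} (hO : O ∈ evenOrbits σ ε) : O.Nonempty := by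
  obtain ⟨i, -, rfl⟩ := mem_image.1 (mem_filter.1 hO).1
  exact ⟨i, self_mem_orbitFinset i⟩

lemma isSignedFixed_extendFromEvenOrbits (f : evenOrbits σ ε → R) :
    IsSignedFixed σ ε (extendFromEvenOrbits σ ε f) := by
  intro i
  have hO : orbitFinset σ (σ i) = orbitFinset σ i :=
    (orbitFinset_eq_of_sameCycle (Perm.sameCycle_apply_right.2 (Perm.SameCycle.refl σ i))).symm
  simp only [extendFromEvenOrbits, hO]
  split_ifs with h
  · rw [orbitPhase_apply (orbitFinset_mem_evenOrbits_iff.1 h), neg_one_pow_val_add]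
    ring
  · rw [mul_zero]

variable (σ ε) in
noncomputable def signedFixedEquiv (h2 : IsUnit (2 : R)) :
    {x : α → R // IsSignedFixed σ ε x} ≃ (evenOrbits σ ε → R) where
  toFun x O := x.1 (O.1.min' (nonempty_of_mem_evenOrbits O.2))
  invFun f := ⟨extendFromEvenOrbits σ ε f, isSignedFixed_extendFromEvenOrbits f⟩
  left_inv := by
    rintro ⟨x, hx⟩
    ext i
    dsimp only [extendFromEvenOrbits]
    split_ifs with h
    · have heven := orbitFinset_mem_evenOrbits_iff.1 h
      obtain ⟨t, ht⟩ := (sameCycle_orbitRep (σ := σ) i).exists_nat_pow_eq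
      change _ * x (orbitRep σ i) = x i
      rw [orbitPhase_eq_walkSum heven ht, ← hx.apply_pow_apply, ht]
    · refine (hx.eq_zero_of_walkSum_ne_zero h2 ?_).symm
      rw [← sum_orbitFinset_eq_walkSum]
      exact mt orbitFinset_mem_evenOrbits_iff.2 h
  right_inv := by
    intro f
    ext ⟨O, hO⟩
    obtain ⟨i, -, rfl⟩ := mem_image.1 (mem_filter.1 hO).1
    have heven := orbitFinset_mem_evenOrbits_iff.1 hO
    have hrep : orbitFinset σ (orbitRep σ i) = orbitFinset σ i :=
      orbitFinset_eq_of_sameCycle (sameCycle_orbitRep i)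
    change extendFromEvenOrbits σ ε f (orbitRep σ i) = _
    rw [extendFromEvenOrbits, dif_pos (hrep ▸ hO), orbitPhase_orbitRep heven, ZMod.val_zero,
      pow_zero, one_mul]
    simp only [hrep]

lemma card_isSignedFixed (h2 : IsUnit (2 : R)) :
    Nat.card {x : α → R // IsSignedFixed σ ε x} = Nat.card R ^ #(evenOrbits σ ε) := by
  rw [Nat.card_congr (signedFixedEquiv σ ε h2), Nat.card_fun, Nat.card_eq_finsetCard]

end Count

lemma smul_eq_self_iff_isSignedFixed {n m : ℕ} (g : B n) (x : Fin n → ZMod m) :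
    g • x = x ↔ IsSignedFixed g.right (Multiplicative.toAdd g.left) x := by
  constructor
  · intro h j
    simpa [bact_smul_def] using (congrFun h (g.right j)).symm
  · intro h
    funext i
    simpa [bact_smul_def] using (h (g.right⁻¹ i)).symm

lemma ZMod.isUnit_two_of_odd {m : ℕ} (hm : Odd m) : IsUnit (2 : ZMod m) := by
  exact_mod_cast (ZMod.isUnit_iff_coprime 2 m).2 (Nat.coprime_two_left.2 hm)

theorem card_fixedPoints_odd_general (n k : ℕ) (g : B n) :
    Nat.card {x : Fin n → ZMod (2 * k + 1) // g • x = x}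
      = (2 * k + 1) ^ evenOrbitCount (Multiplicative.toAdd g.left) g.right := by
  simp_rw [smul_eq_self_iff_isSignedFixed]
  rw [card_isSignedFixed (ZMod.isUnit_two_of_odd (odd_two_mul_add_one k)), Nat.card_zmod]
  -- `evenOrbits` unfolds to the finset of orbits counted by `evenOrbitCount`
  rfl

set_option synthInstance.maxHeartbeats 1000000 in
/-- **Lemma (character of the odd generalized parking space).**  For
`g = (ε, σ) ∈ B n`, the number of points of `Fin n → ZMod (2k+1)` fixed by
`g` is `(2k+1) ^ e(ε,σ)`, where `e(ε,σ)` is the number of even orbits of `σ`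
on `Fin n`. -/
theorem card_fixedPoints_odd (n k : ℕ) (hn : 1 ≤ n) (g : B n) :
    Nat.card {x : Fin n → ZMod (2 * k + 1) // g • x = x}
      = (2 * k + 1) ^ evenOrbitCount (Multiplicative.toAdd g.left) g.right :=
  card_fixedPoints_odd_general n k g
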